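/- Let $h \in \mathbb{Z}$, $k \in \mathbb{N}$ with $\gcd(h,k) = 1$. Then the Dedekind sum satisfies $s(h,k) = \frac{1}{4k} \sum_{a=1}^{k-1} \cot(\pi a/k) \cot(\pi a h/k)$. -/

import Mathlib

/-!
Finite Fourier analysis modulo `k`. At a `k`-th root of unity `z ≠ 1` one has
`∑_{b<k} (b/k - 1/2) z^b = 1/(z - 1)`, whose imaginary part at `z = e^{2πim/k}` is
`-cot(πm/k)/2`; so the sine coefficients of `b ↦ ((b/k))` are `-cot(πm/k)/2`.
Orthogonality of the sines inverts this to `((n/k)) = -(1/2k) ∑_{a<k} cot(πa/k) sin(2πan/k)`.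
Expanding `((bh/k))` this way and summing against `((b/k))` produces the sine coefficient
at `ah`, namely `-cot(πah/k)/2`.
-/

open scoped Classical

/-- The sawtooth function `((x))`. -/
noncomputable def saw (x : ℝ) : ℝ :=
  if ∃ m : ℤ, x = m then 0 else Int.fract x - 1 / 2

/-- The cotangent function. -/
noncomputable def cot (x : ℝ) : ℝ := Real.cos x / Real.sin x

open Finset
open Real hiding cot

lemma saw_eq_ite (x : ℝ) : saw x = if Int.fract x = 0 then 0 else Int.fract x - 1 / 2 := by
  simp only [saw, Int.fract_eq_zero_iff, Set.mem_range, eq_comm]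

lemma saw_add_intCast (x : ℝ) (m : ℤ) : saw (x + m) = saw x := by
  simp only [saw_eq_ite, Int.fract_add_intCast]

lemma saw_neg (x : ℝ) : saw (-x) = -saw x := by
  simp only [saw_eq_ite, Int.fract_neg_eq_zero]
  split_ifs with hx
  · simp
  · rw [Int.fract_neg hx]; ring

lemma saw_of_mem_Ioo {x : ℝ} (hx : x ∈ Set.Ioo 0 1) : saw x = x - 1 / 2 := by
  rw [saw_eq_ite, Int.fract_eq_self.2 ⟨hx.1.le, hx.2⟩, if_neg hx.1.ne']

lemma periodic_saw_intCast_div {k : ℕ} (hk : k ≠ 0) :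
    Function.Periodic (fun n : ℤ => saw (n / k)) k := fun n => by
  have hk' : (k : ℝ) ≠ 0 := Nat.cast_ne_zero.2 hk
  show saw (((n + k : ℤ) : ℝ) / k) = saw (n / k)
  rw [Int.cast_add, Int.cast_natCast, add_div, div_self hk', ← Int.cast_one, saw_add_intCast]

-- Both sides are `0` when `exp (θ * I) = 1`, by `0⁻¹ = 0` and `x / 0 = 0`.
lemma im_inv_exp_mul_I_sub_one (θ : ℝ) :
    ((Complex.exp (θ * Complex.I) - 1)⁻¹).im = -cot (θ / 2) / 2 := by
  obtain ⟨x, rfl⟩ : ∃ x, θ = 2 * x := ⟨θ / 2, by ring⟩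
  rw [Complex.inv_im, Complex.normSq_apply]
  simp only [Complex.sub_re, Complex.sub_im, Complex.one_re, Complex.one_im,
    Complex.exp_ofReal_mul_I_re, Complex.exp_ofReal_mul_I_im, sub_zero]
  rw [mul_div_cancel_left₀ x two_ne_zero, sin_two_mul, cos_two_mul, cot]
  have hnormSq : (2 * cos x ^ 2 - 1 - 1) * (2 * cos x ^ 2 - 1 - 1)
      + 2 * sin x * cos x * (2 * sin x * cos x) = 4 * sin x ^ 2 := by
    linear_combination (4 * cos x ^ 2 - 4) * sin_sq_add_cos_sq x
  rw [hnormSq]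
  rcases eq_or_ne (sin x) 0 with hs | hs
  · simp [hs]
  · field_simp
    ring

lemma sum_range_natCast_mul_pow_of_pow_eq_one {K : Type*} [Field K] {z : K} {k : ℕ}
    (hz : z ^ k = 1) (hz1 : z ≠ 1) :
    ∑ b ∈ range k, (b : K) * z ^ b = k / (z - 1) := by
  have hgeom : ∑ b ∈ range k, z ^ b = 0 := by rw [geom_sum_eq hz1, hz, sub_self, zero_div]
  have hstep : ∀ b ∈ range k, (z - 1) * ((b : K) * z ^ b)
      = (((b + 1 : ℕ) : K) * z ^ (b + 1) - (b : K) * z ^ b) - z * z ^ b := by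
    intro b _; push_cast; ring
  rw [eq_div_iff (sub_ne_zero.2 hz1), mul_comm, mul_sum, sum_congr rfl hstep, sum_sub_distrib,
    sum_range_sub (fun b => (b : K) * z ^ b), ← mul_sum, hgeom, hz]
  simp

lemma sum_range_div_sub_half_mul_pow {K : Type*} [Field K] {z : K} {k : ℕ} (hk : (k : K) ≠ 0)
    (hz : z ^ k = 1) (hz1 : z ≠ 1) :
    ∑ b ∈ range k, ((b : K) / k - 1 / 2) * z ^ b = (z - 1)⁻¹ := by
  have hgeom : ∑ b ∈ range k, z ^ b = 0 := by rw [geom_sum_eq hz1, hz, sub_self, zero_div]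
  simp only [sub_mul, sum_sub_distrib, ← mul_sum, div_mul_eq_mul_div, ← sum_div,
    sum_range_natCast_mul_pow_of_pow_eq_one hz hz1, hgeom, mul_zero]
  field_simp
  simp

section RootsOfUnity

variable {k : ℕ}

local notation "ζ" => Complex.exp (2 * π * Complex.I / k)

lemma exp_two_pi_I_div_zpow_pow (m : ℤ) (b : ℕ) :
    (ζ ^ m) ^ b = Complex.exp (↑(2 * π * m * b / k) * Complex.I) := by
  rw [← Complex.exp_int_mul, ← Complex.exp_nat_mul]
  push_cast
  ring_nf

lemma exp_two_pi_I_div_zpow_pow_self (hk : k ≠ 0) (m : ℤ) : (ζ ^ m) ^ k = 1 := by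
  rw [← zpow_natCast, ← zpow_mul, mul_comm m, zpow_mul, zpow_natCast,
    (Complex.isPrimitiveRoot_exp k hk).pow_eq_one, one_zpow]

lemma sum_range_cos_two_pi_mul_div (hk : k ≠ 0) (m : ℤ) :
    ∑ a ∈ range k, cos (2 * π * m * a / k) = if (k : ℤ) ∣ m then (k : ℝ) else 0 := by
  simp only [← Complex.exp_ofReal_mul_I_re, ← exp_two_pi_I_div_zpow_pow, ← Complex.re_sum]
  split_ifs with hm
  · simp [((Complex.isPrimitiveRoot_exp k hk).zpow_eq_one_iff_dvd m).2 hm]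
  · have hz1 : ζ ^ m ≠ 1 := mt ((Complex.isPrimitiveRoot_exp k hk).zpow_eq_one_iff_dvd m).1 hm
    rw [geom_sum_eq hz1, exp_two_pi_I_div_zpow_pow_self hk, sub_self, zero_div, Complex.zero_re]

lemma sum_range_saw_mul_sin (hk : k ≠ 0) (m : ℤ) :
    ∑ b ∈ range k, saw (b / k) * sin (2 * π * m * b / k) = -cot (π * m / k) / 2 := by
  have hterm : ∀ b ∈ range k, saw (b / k) * sin (2 * π * m * b / k)
      = (((b : ℝ) / k - 1 / 2 : ℝ) * (ζ ^ m) ^ b).im := by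
    intro b hb
    rw [Complex.im_ofReal_mul, exp_two_pi_I_div_zpow_pow, Complex.exp_ofReal_mul_I_im]
    rcases Nat.eq_zero_or_pos b with rfl | hb0
    · simp
    · rw [saw_of_mem_Ioo ⟨by positivity, by
        rw [div_lt_one (by positivity)]; exact_mod_cast mem_range.1 hb⟩]
  have hcot : -cot (π * m / k) / 2 = ((ζ ^ m - 1)⁻¹).im := by
    rw [← pow_one (ζ ^ m), exp_two_pi_I_div_zpow_pow, im_inv_exp_mul_I_sub_one]
    congr 3
    push_cast
    ring
  rw [sum_congr rfl hterm, ← Complex.im_sum, hcot]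
  by_cases hz1 : ζ ^ m = 1
  · simp only [hz1, one_pow, mul_one, sub_self, inv_zero, Complex.zero_im, Complex.im_sum,
      Complex.ofReal_im, sum_const_zero]
  · push_cast
    rw [sum_range_div_sub_half_mul_pow (by exact_mod_cast hk)
      (exp_two_pi_I_div_zpow_pow_self hk m) hz1]

end RootsOfUnity

lemma sum_range_ite_dvd_sub {M : Type*} [AddCommMonoid M] {k : ℕ} (hk : k ≠ 0) {f : ℤ → M}
    (hf : Function.Periodic f k) (n : ℤ) :
    ∑ b ∈ range k, (if (k : ℤ) ∣ b - n then f b else 0) = f n := by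
  have hk' : (0 : ℤ) < k := by exact_mod_cast Nat.pos_of_ne_zero hk
  obtain ⟨r, hr⟩ : ∃ r : ℕ, (r : ℤ) = n % k :=
    ⟨(n % k).toNat, Int.toNat_of_nonneg (Int.emod_nonneg _ hk'.ne')⟩
  have hrk : r < k := by have := Int.emod_lt_of_pos n hk'; omega
  rw [sum_eq_single_of_mem r (mem_range.2 hrk)]
  · have hdvd : (k : ℤ) ∣ r - n := by rw [hr]; exact (Int.mod_modEq n k).symm.dvd
    rw [if_pos hdvd, hr, Int.emod_def, mul_comm]
    simpa using hf.sub_int_mul_eq (n / k)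
  · intro b hb hbr
    rw [if_neg]
    intro hd
    have hmod : n % k = b % k := Int.modEq_iff_dvd.2 hd
    have hb' : (b : ℤ) % k = b :=
      Int.emod_eq_of_lt (by positivity) (by exact_mod_cast mem_range.1 hb)
    omega

lemma sum_range_sin_mul_sin {k : ℕ} (hk : k ≠ 0) (m n : ℤ) :
    ∑ a ∈ range k, sin (2 * π * a * m / k) * sin (2 * π * a * n / k)
      = ((if (k : ℤ) ∣ m - n then (k : ℝ) else 0)
          - if (k : ℤ) ∣ m + n then (k : ℝ) else 0) / 2 := by
  have hterm : ∀ a ∈ range k, sin (2 * π * a * m / k) * sin (2 * π * a * n / k)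
      = (cos (2 * π * ↑(m - n) * a / k) - cos (2 * π * ↑(m + n) * a / k)) / 2 := by
    intro a _
    rw [show 2 * π * ↑(m - n) * a / k = 2 * π * a * m / k - 2 * π * a * n / k by
        push_cast; ring,
      show 2 * π * ↑(m + n) * a / k = 2 * π * a * m / k + 2 * π * a * n / k by
        push_cast; ring,
      cos_sub, cos_add]
    ring
  rw [sum_congr rfl hterm, ← sum_div, sum_sub_distrib, sum_range_cos_two_pi_mul_div hk,
    sum_range_cos_two_pi_mul_div hk]

lemma sum_range_cot_mul_sin {k : ℕ} (hk : k ≠ 0) (n : ℤ) :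
    ∑ a ∈ range k, cot (π * a / k) * sin (2 * π * a * n / k) = -2 * k * saw (n / k) := by
  have hcot : ∀ a : ℕ,
      cot (π * a / k) = -2 * ∑ b ∈ range k, saw (b / k) * sin (2 * π * a * b / k) := by
    intro a
    have := sum_range_saw_mul_sin hk a
    push_cast at this
    linarith
  have hpick : ∀ (b : ℕ) (c : ℤ), saw (b / k) * (if (k : ℤ) ∣ c then (k : ℝ) else 0)
      = k * if (k : ℤ) ∣ c then saw (((b : ℤ) : ℝ) / k) else 0 := by
    intro b c
    split_ifs <;> simp [mul_comm]
  calc ∑ a ∈ range k, cot (π * a / k) * sin (2 * π * a * n / k)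
      = -2 * ∑ b ∈ range k, saw (b / k) *
          ∑ a ∈ range k, sin (2 * π * a * b / k) * sin (2 * π * a * n / k) := by
        simp only [hcot, mul_sum, sum_mul]
        rw [sum_comm]
        exact sum_congr rfl fun b _ => sum_congr rfl fun a _ => by ring
    _ = -k * ((∑ b ∈ range k, if (k : ℤ) ∣ b - n then saw (((b : ℤ) : ℝ) / k) else 0)
          - ∑ b ∈ range k,
              if (k : ℤ) ∣ b - (-n) then saw (((b : ℤ) : ℝ) / k) else 0) := by
        have := fun b : ℕ => sum_range_sin_mul_sin hk b n
        push_cast at this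
        simp only [this, mul_sub, mul_div_assoc', hpick, sub_neg_eq_add, mul_sum,
          ← sum_sub_distrib]
        exact sum_congr rfl fun _ _ => by ring
    _ = -2 * k * saw (n / k) := by
        rw [sum_range_ite_dvd_sub hk (periodic_saw_intCast_div hk),
          sum_range_ite_dvd_sub hk (periodic_saw_intCast_div hk), Int.cast_neg, neg_div, saw_neg]
        ring

lemma sum_range_eq_sum_Icc_one_of_apply_zero {M : Type*} [AddCommMonoid M] {k : ℕ}
    (hk : 0 < k) {f : ℕ → M} (hf : f 0 = 0) :
    ∑ a ∈ range k, f a = ∑ a ∈ Icc 1 (k - 1), f a := by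
  rw [range_eq_Ico, sum_eq_sum_Ico_succ_bot hk, hf, zero_add,
    Icc_sub_one_right_eq_Ico_of_not_isMin (by simpa using hk.ne')]

theorem dedekind_cot_general (h : ℤ) (k : ℕ) (hk : 0 < k) :
    ∑ a ∈ Finset.range k, saw ((a : ℝ) / k) * saw (a * (h : ℝ) / k)
      = 1 / (4 * k) *
          ∑ a ∈ Finset.Icc 1 (k - 1), cot (Real.pi * a / k) * cot (Real.pi * a * (h : ℝ) / k) := by
  have hk0 : k ≠ 0 := hk.ne'
  have hexpand : ∀ b : ℕ, saw (b * h / k)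
      = -1 / (2 * k) * ∑ a ∈ range k, cot (π * a / k) * sin (2 * π * ↑(a * h) * b / k) := by
    intro b
    have := sum_range_cot_mul_sin hk0 (b * h)
    push_cast at this ⊢
    simp only [show ∀ a : ℕ, 2 * π * (a * h) * b / k = 2 * π * a * (b * h) / k from
      fun a => by ring, this]
    field_simp
  have hfourier : ∀ a : ℕ, ∑ b ∈ range k, saw (b / k) * sin (2 * π * ↑(a * h) * b / k)
      = -cot (π * a * h / k) / 2 := by
    intro a
    rw [sum_range_saw_mul_sin hk0]
    push_cast
    ring_nf
  calc ∑ b ∈ range k, saw (b / k) * saw (b * h / k)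
      = -1 / (2 * k) * ∑ a ∈ range k, cot (π * a / k) *
          ∑ b ∈ range k, saw (b / k) * sin (2 * π * ↑(a * h) * b / k) := by
        simp only [hexpand, mul_sum]
        rw [sum_comm]
        exact sum_congr rfl fun a _ => sum_congr rfl fun b _ => by ring
    _ = 1 / (4 * k) * ∑ a ∈ range k, cot (π * a / k) * cot (π * a * h / k) := by
        simp only [hfourier, mul_sum]
        exact sum_congr rfl fun a _ => by ring
    _ = _ := by
        rw [sum_range_eq_sum_Icc_one_of_apply_zero hk (by simp [cot])]

theorem dedekind_cot (h : ℤ) (k : ℕ) (hk : 0 < k) (hco : Int.gcd h k = 1) :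
    ∑ a ∈ Finset.range k, saw ((a : ℝ) / k) * saw (a * (h : ℝ) / k)
      = 1 / (4 * k) *
          ∑ a ∈ Finset.Icc 1 (k - 1), cot (Real.pi * a / k) * cot (Real.pi * a * (h : ℝ) / k) :=
  dedekind_cot_general h k hk
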